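/- Let H be the graph consisting of a triangle with a pendant edge (the graph on four vertices a, b, c, d with edges ab, bc, ca, and cd). Then C(H, K_3) = 3/2. -/

import Mathlib

open SimpleGraph

/-- The homomorphism density `t(G,T)`. -/
noncomputable def homDensity {α β : Type*} [Fintype α] [Fintype β]
    (G : SimpleGraph α) (T : SimpleGraph β) : ℝ :=
  (Nat.card (G →g T) : ℝ) / (Fintype.card β : ℝ) ^ (Fintype.card α)
/-- The set of real exponents `c ≥ 0` such that `t(G,T) ≥ t(H,T)^c` for all
finite graphs `T` with at least one vertex. -/
def domSet {α β : Type*} [Fintype α] [Fintype β]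
    (G : SimpleGraph α) (H : SimpleGraph β) : Set ℝ :=
  {c : ℝ | 0 ≤ c ∧ ∀ (n : ℕ), 0 < n → ∀ T : SimpleGraph (Fin n),
    homDensity H T ^ c ≤ homDensity G T}

/-- The homomorphism density domination exponent `C(G,H)`, as the infimum of `domSet G H`. -/
noncomputable def domExp {α β : Type*} [Fintype α] [Fintype β]
    (G : SimpleGraph α) (H : SimpleGraph β) : ℝ :=
  sInf (domSet G H)

/-- The triangle with a pendant edge: vertices `0,1,2,3` and edges
`{0,1}, {1,2}, {0,2}, {2,3}`. -/
def trianglePendant : SimpleGraph (Fin 4) :=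
  SimpleGraph.fromRel (fun x y =>
    (x = 0 ∧ y = 1) ∨ (x = 1 ∧ y = 2) ∨ (x = 0 ∧ y = 2) ∨ (x = 2 ∧ y = 3))


open Finset Filter



def homEquivSubtype {α β : Type*} (G : SimpleGraph α) (T : SimpleGraph β) :
    (G →g T) ≃ {f : α → β // ∀ a b, G.Adj a b → T.Adj (f a) (f b)} where
  toFun f := ⟨f, fun _ _ h => f.map_rel h⟩
  invFun f := ⟨f.1, fun {a b} h => f.2 a b h⟩
  left_inv _ := rfl
  right_inv _ := rfl

lemma top3_prop {β : Type*} (T : SimpleGraph β) (f : Fin 3 → β) :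
    (∀ a b, (⊤ : SimpleGraph (Fin 3)).Adj a b → T.Adj (f a) (f b)) ↔
    (T.Adj (f 0) (f 1) ∧ T.Adj (f 1) (f 2) ∧ T.Adj (f 0) (f 2)) := by
  constructor
  · intro h
    exact ⟨h 0 1 (by decide), h 1 2 (by decide), h 0 2 (by decide)⟩
  · rintro ⟨h1, h2, h3⟩ a b hab
    fin_cases a <;> fin_cases b <;> simp at hab ⊢ <;>
      first | exact h1 | exact h2 | exact h3 | exact h1.symm | exact h2.symm | exact h3.symm

lemma tp_prop {β : Type*} (T : SimpleGraph β) (f : Fin 4 → β) :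
    (∀ a b, trianglePendant.Adj a b → T.Adj (f a) (f b)) ↔
    (T.Adj (f 0) (f 1) ∧ T.Adj (f 1) (f 2) ∧ T.Adj (f 0) (f 2) ∧ T.Adj (f 2) (f 3)) := by
  constructor
  · intro h
    exact ⟨h 0 1 (by simp [trianglePendant]), h 1 2 (by simp [trianglePendant]),
      h 0 2 (by simp [trianglePendant]), h 2 3 (by simp [trianglePendant])⟩
  · rintro ⟨h1, h2, h3, h4⟩ a b hab
    rw [trianglePendant, SimpleGraph.fromRel_adj] at hab
    obtain ⟨hne, hr⟩ := hab
    fin_cases a <;> fin_cases b <;> simp_all <;> first | exact h1 | exact h2 | exact h3 | exact h4 | exact h1.symm | exact h2.symm | exact h3.symm | exact h4.symm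

noncomputable section

/-- number of neighbors of `z`. -/
noncomputable def dC {n : ℕ} (T : SimpleGraph (Fin n)) (z : Fin n) : ℕ :=
  Nat.card {w : Fin n // T.Adj z w}

/-- number of ordered triangles through `z`. -/
noncomputable def tC {n : ℕ} (T : SimpleGraph (Fin n)) (z : Fin n) : ℕ :=
  Nat.card {p : Fin n × Fin n // T.Adj p.1 p.2 ∧ T.Adj p.1 z ∧ T.Adj p.2 z}

def sigmaEquiv3 {n : ℕ} (T : SimpleGraph (Fin n)) :
    {f : Fin 3 → Fin n // T.Adj (f 0) (f 1) ∧ T.Adj (f 1) (f 2) ∧ T.Adj (f 0) (f 2)} ≃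
    Σ z : Fin n, {p : Fin n × Fin n // T.Adj p.1 p.2 ∧ T.Adj p.1 z ∧ T.Adj p.2 z} where
  toFun f := ⟨f.1 2, ⟨(f.1 0, f.1 1), ⟨f.2.1, f.2.2.2, f.2.2.1⟩⟩⟩
  invFun q := ⟨![q.2.1.1, q.2.1.2, q.1], ⟨q.2.2.1, q.2.2.2.2, q.2.2.2.1⟩⟩
  left_inv f := by
    apply Subtype.ext; funext i; fin_cases i <;> rfl
  right_inv q := rfl

def sigmaEquiv4 {n : ℕ} (T : SimpleGraph (Fin n)) :
    {f : Fin 4 → Fin n // T.Adj (f 0) (f 1) ∧ T.Adj (f 1) (f 2) ∧ T.Adj (f 0) (f 2) ∧ T.Adj (f 2) (f 3)} ≃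
    Σ z : Fin n, {p : Fin n × Fin n // T.Adj p.1 p.2 ∧ T.Adj p.1 z ∧ T.Adj p.2 z} ×
      {w : Fin n // T.Adj z w} where
  toFun f := ⟨f.1 2, ⟨⟨(f.1 0, f.1 1), ⟨f.2.1, f.2.2.2.1, f.2.2.1⟩⟩, ⟨f.1 3, f.2.2.2.2⟩⟩⟩
  invFun q := ⟨![q.2.1.1.1, q.2.1.1.2, q.1, q.2.2.1],
    ⟨q.2.1.2.1, q.2.1.2.2.2, q.2.1.2.2.1, q.2.2.2⟩⟩
  left_inv f := by
    apply Subtype.ext; funext i; fin_cases i <;> rfl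
  right_inv q := rfl

lemma card_hom3 {n : ℕ} (T : SimpleGraph (Fin n)) :
    Nat.card ((⊤ : SimpleGraph (Fin 3)) →g T) = ∑ z, tC T z := by
  classical
  rw [Nat.card_congr ((homEquivSubtype _ T).trans
    ((Equiv.subtypeEquivRight (top3_prop T)).trans (sigmaEquiv3 T)))]
  rw [Nat.card_eq_fintype_card, Fintype.card_sigma]
  refine Finset.sum_congr rfl fun z _ => ?_
  rw [tC, Nat.card_eq_fintype_card]

lemma card_hom4 {n : ℕ} (T : SimpleGraph (Fin n)) :
    Nat.card (trianglePendant →g T) = ∑ z, tC T z * dC T z := by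
  classical
  rw [Nat.card_congr ((homEquivSubtype _ T).trans
    ((Equiv.subtypeEquivRight (tp_prop T)).trans (sigmaEquiv4 T)))]
  rw [Nat.card_eq_fintype_card, Fintype.card_sigma]
  refine Finset.sum_congr rfl fun z _ => ?_
  rw [tC, dC, Nat.card_eq_fintype_card, Nat.card_eq_fintype_card, Fintype.card_prod]

lemma tC_le {n : ℕ} (T : SimpleGraph (Fin n)) (z : Fin n) : tC T z ≤ dC T z ^ 2 := by
  classical
  have : dC T z ^ 2 = Nat.card ({w : Fin n // T.Adj z w} × {w : Fin n // T.Adj z w}) := by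
    rw [Nat.card_prod, dC, sq]
  rw [this]
  apply Nat.card_le_card_of_injective
    (fun p => (⟨p.1.1, p.2.2.1.symm⟩, ⟨p.1.2, p.2.2.2.symm⟩))
  intro p q h
  apply Subtype.ext
  have h1 := congrArg (fun x => (x.1 : Fin n)) h
  have h2 := congrArg (fun x => (x.2 : Fin n)) h
  simp at h1 h2
  exact Prod.ext h1 h2
end

lemma key_ineq {n : ℕ} (t d : Fin n → ℝ) (ht : ∀ z, 0 ≤ t z) (hd : ∀ z, 0 ≤ d z)
    (h : ∀ z, t z ≤ d z ^ 2) :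
    (∑ z, t z) ^ 3 ≤ n * (∑ z, t z * d z) ^ 2 := by
  set b : Fin n → ℝ := fun z => Real.sqrt (t z) with hb
  have hb0 : ∀ z, 0 ≤ b z := fun z => Real.sqrt_nonneg _
  have hb2 : ∀ z, b z ^ 2 = t z := fun z => Real.sq_sqrt (ht z)
  have hbd : ∀ z, b z ≤ d z := fun z => by
    have := Real.sqrt_le_sqrt (h z)
    rwa [Real.sqrt_sq (hd z)] at this
  have hS1 : (0:ℝ) ≤ ∑ z, b z := Finset.sum_nonneg fun z _ => hb0 z
  have hS3 : (0:ℝ) ≤ ∑ z, b z ^ 3 := Finset.sum_nonneg fun z _ => pow_nonneg (hb0 z) 3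
  have hTD : (0:ℝ) ≤ ∑ z, t z * d z :=
    Finset.sum_nonneg fun z _ => mul_nonneg (ht z) (hd z)
  have h3 : ∑ z, b z ^ 3 ≤ ∑ z, t z * d z := by
    refine Finset.sum_le_sum fun z _ => ?_
    calc b z ^ 3 = b z ^ 2 * b z := by ring
    _ ≤ t z * d z := by rw [hb2]; exact mul_le_mul_of_nonneg_left (hbd z) (ht z)
  have cs1 : (∑ z, b z) ^ 2 ≤ n * ∑ z, b z ^ 2 := by
    have := sq_sum_le_card_mul_sum_sq (s := (univ : Finset (Fin n))) (f := b)
    simpa using this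
  have cs2 : (∑ z, b z ^ 2) ^ 2 ≤ (∑ z, b z) * (∑ z, b z ^ 3) := by
    have key := Finset.sum_mul_sq_le_sq_mul_sq univ (fun z => Real.sqrt (b z))
      (fun z => Real.sqrt (b z ^ 3))
    have e1 : ∀ z : Fin n, Real.sqrt (b z) * Real.sqrt (b z ^ 3) = b z ^ 2 := fun z => by
      rw [← Real.sqrt_mul (hb0 z)]
      have : b z * b z ^ 3 = (b z ^ 2) ^ 2 := by ring
      rw [this, Real.sqrt_sq (sq_nonneg _)]
    have e2 : ∀ z : Fin n, Real.sqrt (b z) ^ 2 = b z := fun z => Real.sq_sqrt (hb0 z)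
    have e3 : ∀ z : Fin n, Real.sqrt (b z ^ 3) ^ 2 = b z ^ 3 := fun z =>
      Real.sq_sqrt (pow_nonneg (hb0 z) 3)
    simp only [e1, e2, e3] at key
    exact key
  have hst : ∑ z, t z = ∑ z, b z ^ 2 := by
    refine Finset.sum_congr rfl fun z _ => (hb2 z).symm
  rw [hst]
  set S1 := ∑ z, b z
  set S2 := ∑ z, b z ^ 2 with hS2def
  set S3 := ∑ z, b z ^ 3
  set TD := ∑ z, t z * d z
  have hS2 : (0:ℝ) ≤ S2 := Finset.sum_nonneg fun z _ => sq_nonneg _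
  rcases eq_or_lt_of_le hS2 with h0 | h0
  · rw [← h0]
    norm_num
    positivity
  · -- S2^4 ≤ S1^2 * S3^2 ≤ n S2 S3^2, so S2^3 ≤ n S3^2 ≤ n TD^2
    have h4 : S2 ^ 4 ≤ (n * S2) * S3 ^ 2 := by nlinarith [sq_nonneg S1, sq_nonneg S3]
    have h5 : S2 ^ 3 ≤ n * S3 ^ 2 := by
      have h4' : S2 ^ 3 * S2 ≤ (n * S3 ^ 2) * S2 := by nlinarith [h4]
      exact le_of_mul_le_mul_right h4' h0
    have h6 : S3 ^ 2 ≤ TD ^ 2 := by nlinarith [h3, hS3, hTD]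
    nlinarith [h5, h6]
lemma density_step {A B n : ℕ} (hn : 0 < n) (key : (A:ℝ)^3 ≤ n * (B:ℝ)^2) :
    ((A:ℝ) / (n:ℝ)^3) ^ ((3:ℝ)/2) ≤ (B:ℝ) / (n:ℝ)^4 := by
  have hn' : (0:ℝ) < n := by exact_mod_cast hn
  set a : ℝ := (A:ℝ) / (n:ℝ)^3 with ha
  set b : ℝ := (B:ℝ) / (n:ℝ)^4 with hb
  have ha0 : 0 ≤ a := by positivity
  have hb0 : 0 ≤ b := by positivity
  have h2 : a ^ 3 ≤ b ^ 2 := by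
    rw [ha, hb, div_pow, div_pow, div_le_div_iff₀ (by positivity) (by positivity)]
    calc (A:ℝ)^3 * ((n:ℝ)^4)^2 = ((A:ℝ)^3) * (n:ℝ)^8 := by ring
    _ ≤ (n * (B:ℝ)^2) * (n:ℝ)^8 := by
        exact mul_le_mul_of_nonneg_right key (by positivity)
    _ = (B:ℝ)^2 * ((n:ℝ)^3)^3 := by ring
  have hpow : (a ^ ((3:ℝ)/2)) ^ (2:ℕ) = a ^ (3:ℕ) := by
    rw [← Real.rpow_natCast (a ^ ((3:ℝ)/2)) 2, ← Real.rpow_mul ha0,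
      ← Real.rpow_natCast a 3]
    norm_num
  have hle : (a ^ ((3:ℝ)/2)) ^ (2:ℕ) ≤ b ^ (2:ℕ) := by rw [hpow]; exact h2
  exact (pow_le_pow_iff_left₀ (Real.rpow_nonneg ha0 _) hb0 (by norm_num)).1 hle

def Tk (k : ℕ) : SimpleGraph (Fin (3*k)) where
  Adj x y := x ≠ y ∧ (x:ℕ)/3 = (y:ℕ)/3
  symm := ⟨fun _ _ h => ⟨h.1.symm, h.2.symm⟩⟩
  loopless := ⟨fun _ h => h.1 rfl⟩

def emb {k : ℕ} (b : Fin k) (r : Fin 3) : Fin (3*k) :=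
  ⟨3*(b:ℕ)+(r:ℕ), by have := b.isLt; have := r.isLt; omega⟩

def res {k : ℕ} (x : Fin (3*k)) : Fin 3 := ⟨(x:ℕ) % 3, Nat.mod_lt _ (by norm_num)⟩

def blk {k : ℕ} (x : Fin (3*k)) : Fin k := ⟨(x:ℕ)/3, by have := x.isLt; omega⟩

lemma emb_adj {k : ℕ} (b : Fin k) {r s : Fin 3} (h : r ≠ s) :
    (Tk k).Adj (emb b r) (emb b s) := by
  refine ⟨fun he => h ?_, ?_⟩
  · have := congrArg Fin.val he
    simp only [emb] at this
    exact Fin.ext (by omega)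
  · show (3*(b:ℕ)+(r:ℕ))/3 = (3*(b:ℕ)+(s:ℕ))/3
    omega

lemma res_ne {k : ℕ} {x y : Fin (3*k)} (h : (Tk k).Adj x y) : res x ≠ res y := by
  intro he
  apply h.1
  have h2 : (x:ℕ)/3 = (y:ℕ)/3 := h.2
  have h3 : (x:ℕ) % 3 = (y:ℕ) % 3 := congrArg Fin.val he
  exact Fin.ext (by omega)

lemma blk_eq {k : ℕ} {x y : Fin (3*k)} (h : (Tk k).Adj x y) : blk x = blk y :=
  Fin.ext h.2

lemma emb_blk_res {k : ℕ} (x : Fin (3*k)) : emb (blk x) (res x) = x :=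
  Fin.ext (by simp only [emb, blk, res]; omega)

lemma blk_emb {k : ℕ} (b : Fin k) (r : Fin 3) : blk (emb b r) = b :=
  Fin.ext (by simp only [emb, blk]; have := r.isLt; omega)

lemma res_emb {k : ℕ} (b : Fin k) (r : Fin 3) : res (emb b r) = r :=
  Fin.ext (by simp only [emb, res]; have := r.isLt; omega)

def blockEquiv4 (k : ℕ) :
    {f : Fin 4 → Fin (3*k) // (Tk k).Adj (f 0) (f 1) ∧ (Tk k).Adj (f 1) (f 2) ∧
      (Tk k).Adj (f 0) (f 2) ∧ (Tk k).Adj (f 2) (f 3)} ≃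
    Fin k × {g : Fin 4 → Fin 3 // g 0 ≠ g 1 ∧ g 1 ≠ g 2 ∧ g 0 ≠ g 2 ∧ g 2 ≠ g 3} where
  toFun f := ⟨blk (f.1 2), ⟨fun i => res (f.1 i),
    ⟨res_ne f.2.1, res_ne f.2.2.1, res_ne f.2.2.2.1, res_ne f.2.2.2.2⟩⟩⟩
  invFun p := ⟨fun i => emb p.1 (p.2.1 i),
    ⟨emb_adj _ p.2.2.1, emb_adj _ p.2.2.2.1, emb_adj _ p.2.2.2.2.1, emb_adj _ p.2.2.2.2.2⟩⟩
  left_inv f := by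
    obtain ⟨g, h1, h2, h3, h4⟩ := f
    apply Subtype.ext
    funext i
    show emb (blk (g 2)) (res (g i)) = g i
    have e0 : blk (g 0) = blk (g 2) := blk_eq h3
    have e1 : blk (g 1) = blk (g 2) := blk_eq h2
    have e3 : blk (g 3) = blk (g 2) := (blk_eq h4).symm
    have hall : ∀ i, blk (g i) = blk (g 2) := by
      intro i
      fin_cases i
      · exact e0
      · exact e1
      · rfl
      · exact e3
    rw [← hall i, emb_blk_res]
  right_inv p := by
    obtain ⟨b, g, hg⟩ := p
    refine Prod.ext ?_ (Subtype.ext (funext fun i => ?_))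
    · show blk (emb b (g 2)) = b
      exact blk_emb b (g 2)
    · show res (emb b (g i)) = g i
      exact res_emb b (g i)

def blockEquiv3 (k : ℕ) :
    {f : Fin 3 → Fin (3*k) // (Tk k).Adj (f 0) (f 1) ∧ (Tk k).Adj (f 1) (f 2) ∧
      (Tk k).Adj (f 0) (f 2)} ≃
    Fin k × {g : Fin 3 → Fin 3 // g 0 ≠ g 1 ∧ g 1 ≠ g 2 ∧ g 0 ≠ g 2} where
  toFun f := ⟨blk (f.1 2), ⟨fun i => res (f.1 i),
    ⟨res_ne f.2.1, res_ne f.2.2.1, res_ne f.2.2.2⟩⟩⟩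
  invFun p := ⟨fun i => emb p.1 (p.2.1 i),
    ⟨emb_adj _ p.2.2.1, emb_adj _ p.2.2.2.1, emb_adj _ p.2.2.2.2⟩⟩
  left_inv f := by
    obtain ⟨g, h1, h2, h3⟩ := f
    apply Subtype.ext
    funext i
    show emb (blk (g 2)) (res (g i)) = g i
    have e0 : blk (g 0) = blk (g 2) := blk_eq h3
    have e1 : blk (g 1) = blk (g 2) := blk_eq h2
    have hall : ∀ i, blk (g i) = blk (g 2) := by
      intro i
      fin_cases i
      · exact e0
      · exact e1
      · rfl
    rw [← hall i, emb_blk_res]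
  right_inv p := by
    obtain ⟨b, g, hg⟩ := p
    refine Prod.ext ?_ (Subtype.ext (funext fun i => ?_))
    · exact blk_emb b (g 2)
    · exact res_emb b (g i)

lemma card6 : Nat.card {g : Fin 3 → Fin 3 // g 0 ≠ g 1 ∧ g 1 ≠ g 2 ∧ g 0 ≠ g 2} = 6 := by
  rw [Nat.card_eq_fintype_card]
  decide

lemma card12 : Nat.card {g : Fin 4 → Fin 3 // g 0 ≠ g 1 ∧ g 1 ≠ g 2 ∧ g 0 ≠ g 2 ∧ g 2 ≠ g 3} = 12 := by
  rw [Nat.card_eq_fintype_card]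
  decide

lemma contra_lemma {c : ℝ} (hlt : c < 3/2)
    (h : ∀ k : ℕ, 1 ≤ k → ((6*(k:ℝ))/(3*(k:ℝ))^3) ^ c ≤ (12*(k:ℝ))/(3*(k:ℝ))^4) : False := by
  set M : ℝ := (4/27) / ((2/9:ℝ)^c) with hM
  have h9 : (0:ℝ) < (2/9:ℝ)^c := Real.rpow_pos_of_pos (by norm_num) c
  have key : ∀ k : ℕ, 1 ≤ k → ((k:ℝ)) ^ (3 - 2*c) ≤ M := by
    intro k hk
    have hx : (0:ℝ) < (k:ℝ) := by exact_mod_cast hk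
    have hx0 : (0:ℝ) ≤ (k:ℝ) := hx.le
    set x : ℝ := (k:ℝ)
    have e1 : (6*x)/(3*x)^3 = (2/9) * ((x:ℝ)^(2:ℕ))⁻¹ := by
      field_simp
      ring
    have e2 : (12*x)/(3*x)^4 = (4/27) * ((x:ℝ)^(3:ℕ))⁻¹ := by
      field_simp
      ring
    have h' := h k hk
    rw [e1, e2, Real.mul_rpow (by norm_num) (by positivity)] at h'
    have e3 : ((x^(2:ℕ))⁻¹ : ℝ) ^ c = (x ^ (2*c))⁻¹ := by
      rw [← Real.rpow_natCast x 2, ← Real.rpow_neg hx0, ← Real.rpow_mul hx0,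
        ← Real.rpow_neg hx0]
      congr 1
      push_cast
      ring
    rw [e3] at h'
    -- h' : (2/9)^c * (x^(2c))⁻¹ ≤ 4/27 * (x^3)⁻¹
    have hx2c : (0:ℝ) < x ^ (2*c) := Real.rpow_pos_of_pos hx _
    have h'' : (2/9:ℝ)^c ≤ (4/27) * (x^(3:ℕ))⁻¹ * x^(2*c) := by
      have := mul_le_mul_of_nonneg_right h' hx2c.le
      rwa [mul_assoc, inv_mul_cancel₀ hx2c.ne', mul_one] at this
    have e4 : (4/27:ℝ) * (x^(3:ℕ))⁻¹ * x^(2*c) = (4/27) * (x ^ (3 - 2*c))⁻¹ := by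
      rw [← Real.rpow_natCast x 3]
      rw [mul_assoc, ← Real.rpow_neg hx0, ← Real.rpow_add hx]
      rw [← Real.rpow_neg hx0]
      ring_nf
    rw [e4] at h''
    have hpos : (0:ℝ) < x ^ (3 - 2*c) := Real.rpow_pos_of_pos hx _
    rw [hM, le_div_iff₀ h9]
    calc x ^ (3-2*c) * (2/9:ℝ)^c ≤ x ^ (3-2*c) * ((4/27) * (x ^ (3 - 2*c))⁻¹) := by
          exact mul_le_mul_of_nonneg_left h'' hpos.le
    _ = 4/27 := by
          field_simp
  have ht : Tendsto (fun k : ℕ => ((k:ℝ)) ^ (3 - 2*c)) atTop atTop :=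
    (tendsto_rpow_atTop (by linarith)).comp tendsto_natCast_atTop_atTop
  obtain ⟨k, hk⟩ := ((ht.eventually_gt_atTop M).and (eventually_ge_atTop 1)).exists
  exact absurd (key k hk.2) (not_le.2 hk.1)
lemma half_mem : (3/2 : ℝ) ∈ domSet trianglePendant (⊤ : SimpleGraph (Fin 3)) := by
  refine ⟨by norm_num, fun n hn T => ?_⟩
  have hkey : ((∑ z, tC T z : ℕ) : ℝ) ^ 3 ≤ (n : ℝ) * ((∑ z, tC T z * dC T z : ℕ) : ℝ) ^ 2 := by
    have := key_ineq (fun z => (tC T z : ℝ)) (fun z => (dC T z : ℝ))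
      (fun z => by positivity) (fun z => by positivity)
      (fun z => by show ((tC T z : ℕ):ℝ) ≤ ((dC T z : ℕ):ℝ)^2; exact_mod_cast tC_le T z)
    push_cast
    exact this
  have e3 : homDensity (⊤ : SimpleGraph (Fin 3)) T
      = ((∑ z, tC T z : ℕ) : ℝ) / (n:ℝ)^3 := by
    rw [homDensity, card_hom3, Fintype.card_fin, Fintype.card_fin]
  have e4 : homDensity trianglePendant T
      = ((∑ z, tC T z * dC T z : ℕ) : ℝ) / (n:ℝ)^4 := by
    rw [homDensity, card_hom4, Fintype.card_fin, Fintype.card_fin]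
  rw [e3, e4]
  exact density_step hn hkey

lemma card_hom3_Tk (k : ℕ) :
    Nat.card ((⊤ : SimpleGraph (Fin 3)) →g Tk k) = 6 * k := by
  rw [Nat.card_congr ((homEquivSubtype _ _).trans
    ((Equiv.subtypeEquivRight (top3_prop (Tk k))).trans (blockEquiv3 k)))]
  rw [Nat.card_prod, card6, Nat.card_eq_fintype_card, Fintype.card_fin]
  ring

lemma card_hom4_Tk (k : ℕ) :
    Nat.card (trianglePendant →g Tk k) = 12 * k := by
  rw [Nat.card_congr ((homEquivSubtype _ _).trans
    ((Equiv.subtypeEquivRight (tp_prop (Tk k))).trans (blockEquiv4 k)))]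
  rw [Nat.card_prod, card12, Nat.card_eq_fintype_card, Fintype.card_fin]
  ring

lemma lb_half {c : ℝ} (hc : c ∈ domSet trianglePendant (⊤ : SimpleGraph (Fin 3))) :
    3/2 ≤ c := by
  by_contra hlt
  push_neg at hlt
  obtain ⟨hc0, hC⟩ := hc
  refine contra_lemma hlt fun k hk => ?_
  have h := hC (3*k) (by omega) (Tk k)
  have e3 : homDensity (⊤ : SimpleGraph (Fin 3)) (Tk k) = (6*(k:ℝ))/(3*(k:ℝ))^3 := by
    rw [homDensity, card_hom3_Tk, Fintype.card_fin, Fintype.card_fin]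
    push_cast
    ring_nf
  have e4 : homDensity trianglePendant (Tk k) = (12*(k:ℝ))/(3*(k:ℝ))^4 := by
    rw [homDensity, card_hom4_Tk, Fintype.card_fin, Fintype.card_fin]
    push_cast
    ring_nf
  rw [e3, e4] at h
  exact h

theorem stmt_18 : domExp trianglePendant (⊤ : SimpleGraph (Fin 3)) = 3/2 := by
  apply le_antisymm
  · exact csInf_le ⟨0, fun x hx => hx.1⟩ half_mem
  · exact le_csInf ⟨3/2, half_mem⟩ fun c hc => lb_half hc
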